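/- Let b < -log 2 and for K ≥ 2 define the potential φ_{b,K} on [0,1] for the doubling map by φ_{b,K} = ∑_{k≥0} a_k 1_{(2^{-k-1}, 2^{-k}]} with a_k = b for k < K and a_k = 2 log((k+1)/(k+2)) for k ≥ K. There exists b_K < -log 2 such that ∑_n e^{s_n} ≤ 1 if and only if b ≤ b_K (with equality iff b = b_K), where s_n = ∑_{k<n} a_k. Moreover b_K → -log 2 as K → ∞. -/

import Mathlib

/-!
Put `r = e^b`. Since `e^{s_n} = r^n` for `n ≤ K` and `e^{s_n} = r^K ((K+1)/(n+1))^2` for `n > K`,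
`∑_{n ≥ 1} e^{s_n} = ∑_{n=1}^K r^n + r^K (K+1)^2 C_K` with `C_K = ∑_{m ≥ K+2} m^{-2}`.
This is a continuous, strictly increasing function of `r ≥ 0` which vanishes at `r = 0`; comparing
`C_K` with telescoping sums gives `1/(K+2) < C_K ≤ 1/(K+1)`. The lower bound makes the value at
`r = 1/2` exceed `1`, so there is a unique root `r_K ∈ (0, 1/2)` and `b_K = log r_K`. The upper
bound shows that for fixed `r < 1/2` the value is at most `r/(1-r) + (K+1) r^K`, which is
eventually `< 1`; hence `r_K → 1/2`.
-/

open Filter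

/-- `s_n` for the Hofbauer–Keller potential `φ_{b,K}`:
`s_n = nb` for `n ≤ K` and `s_n = Kb + 2 log((K+1)/(n+1))` for `n > K`. -/
noncomputable def sHK17 (b : ℝ) (K : ℕ) (n : ℕ) : ℝ :=
  if n ≤ K then n * b
  else K * b + 2 * Real.log (((K : ℝ) + 1) / ((n : ℝ) + 1))

open Finset Real Topology

theorem hasSum_sub_succ_of_antitone {f : ℕ → ℝ} (hf : Antitone f)
    (hlim : Tendsto f atTop (𝓝 0)) : HasSum (fun n => f n - f (n + 1)) (f 0) := by
  rw [hasSum_iff_tendsto_nat_of_nonneg fun n => sub_nonneg.2 (hf n.le_succ)]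
  simp_rw [sum_range_sub']
  simpa using hlim.const_sub (f 0)

theorem one_div_sub_one_div_add_one {x : ℝ} (hx : 0 < x) :
    1 / x - 1 / (x + 1) = 1 / (x * (x + 1)) := by
  field_simp
  ring

theorem summable_one_div_nat_add_sq (a : ℝ) : Summable fun n : ℕ => 1 / ((n : ℝ) + a) ^ 2 := by
  have h := (summable_one_div_nat_add_rpow a 2).2 one_lt_two
  simpa only [rpow_two, sq_abs] using h

theorem hasSum_one_div_nat_add_sub {a : ℝ} (ha : 0 < a) :
    HasSum (fun n : ℕ => 1 / ((n : ℝ) + a) - 1 / ((n + 1 : ℕ) + a)) (1 / a) := by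
  have hf : Antitone fun n : ℕ => 1 / ((n : ℝ) + a) := fun m n hmn =>
    one_div_le_one_div_of_le (by positivity) (by gcongr)
  have hlim : Tendsto (fun n : ℕ => 1 / ((n : ℝ) + a)) atTop (𝓝 0) := by
    simpa only [one_div, Pi.inv_def] using
      (tendsto_atTop_add_const_right _ a tendsto_natCast_atTop_atTop).inv_tendsto_atTop
  simpa using hasSum_sub_succ_of_antitone hf hlim

theorem one_div_lt_tsum_one_div_nat_add_sq {a : ℝ} (ha : 0 < a) :
    1 / a < ∑' n : ℕ, 1 / ((n : ℝ) + a) ^ 2 := by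
  have hlt : ∀ n : ℕ, 1 / ((n : ℝ) + a) - 1 / ((n + 1 : ℕ) + a) < 1 / ((n : ℝ) + a) ^ 2 := by
    intro n
    have hx : 0 < (n : ℝ) + a := by positivity
    rw [Nat.cast_succ, add_right_comm, one_div_sub_one_div_add_one hx]
    exact one_div_lt_one_div_of_lt (by positivity) (by nlinarith)
  rw [← (hasSum_one_div_nat_add_sub ha).tsum_eq]
  exact Summable.tsum_lt_tsum (fun n => (hlt n).le) (hlt 0)
    (hasSum_one_div_nat_add_sub ha).summable (summable_one_div_nat_add_sq a)

theorem tsum_one_div_nat_add_sq_le {a : ℝ} (ha : 1 < a) :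
    ∑' n : ℕ, 1 / ((n : ℝ) + a) ^ 2 ≤ 1 / (a - 1) := by
  have ha' : 0 < a - 1 := sub_pos.2 ha
  have hle : ∀ n : ℕ,
      1 / ((n : ℝ) + a) ^ 2 ≤ 1 / ((n : ℝ) + (a - 1)) - 1 / ((n + 1 : ℕ) + (a - 1)) := by
    intro n
    have hx : 0 < (n : ℝ) + (a - 1) := by positivity
    rw [Nat.cast_succ, add_right_comm, one_div_sub_one_div_add_one hx]
    exact one_div_le_one_div_of_le (by positivity) (by nlinarith)
  rw [← (hasSum_one_div_nat_add_sub ha').tsum_eq]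
  exact Summable.tsum_le_tsum hle (summable_one_div_nat_add_sq a)
    (hasSum_one_div_nat_add_sub ha').summable

theorem exp_sHK17_of_le {b : ℝ} {K n : ℕ} (h : n ≤ K) : exp (sHK17 b K n) = exp b ^ n := by
  rw [sHK17, if_pos h, exp_nat_mul]

theorem exp_sHK17_of_lt {b : ℝ} {K n : ℕ} (h : K < n) :
    exp (sHK17 b K n) = exp b ^ K * (((K : ℝ) + 1) / ((n : ℝ) + 1)) ^ 2 := by
  have hpos : 0 < ((K : ℝ) + 1) / ((n : ℝ) + 1) := by positivity
  rw [sHK17, if_neg h.not_ge, exp_add, exp_nat_mul, ← exp_log (pow_pos hpos 2), log_pow]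
  norm_num

noncomputable def hkSum (K : ℕ) (r : ℝ) : ℝ :=
  ∑ n ∈ range K, r ^ (n + 1) + r ^ K * ((K : ℝ) + 1) ^ 2 * ∑' n : ℕ, 1 / ((n : ℝ) + (K + 2)) ^ 2

theorem continuous_hkSum (K : ℕ) : Continuous (hkSum K) := by
  unfold hkSum
  fun_prop

theorem tsum_exp_sHK17 (b : ℝ) (K : ℕ) :
    ∑' n : ℕ, exp (sHK17 b K (n + 1)) = hkSum K (exp b) := by
  set f : ℕ → ℝ := fun n => exp (sHK17 b K (n + 1))
  have htail : ∀ n, f (n + K) = exp b ^ K * ((K : ℝ) + 1) ^ 2 * (1 / ((n : ℝ) + (K + 2)) ^ 2) := by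
    intro n
    simp only [f, exp_sHK17_of_lt (by omega : K < n + K + 1)]
    push_cast
    field_simp
    ring
  have hsummable : Summable f := (summable_nat_add_iff K).1 <|
    ((summable_one_div_nat_add_sq _).mul_left _).congr fun n => (htail n).symm
  rw [← hsummable.sum_add_tsum_nat_add K, tsum_congr htail, tsum_mul_left, hkSum]
  congr 1
  exact sum_congr rfl fun n hn => exp_sHK17_of_le (mem_range.1 hn)

section hkSum

variable {K : ℕ}

theorem hkSum_zero (hK : K ≠ 0) : hkSum K 0 = 0 := by
  simp [hkSum, hK]

theorem strictMonoOn_hkSum (hK : K ≠ 0) : StrictMonoOn (hkSum K) (Set.Ici 0) := by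
  intro r hr s _ hrs
  have hr0 : 0 ≤ r := hr
  have hC : 0 < ∑' n : ℕ, 1 / ((n : ℝ) + (K + 2)) ^ 2 :=
    (one_div_pos.2 (by positivity)).trans (one_div_lt_tsum_one_div_nat_add_sq (by positivity))
  unfold hkSum
  exact add_lt_add_of_le_of_lt (by gcongr) (by gcongr)

theorem one_lt_hkSum_half (hK : K ≠ 0) : 1 < hkSum K (1 / 2) := by
  have hgeom : ∑ n ∈ range K, (1 / 2 : ℝ) ^ (n + 1) = 1 - (1 / 2) ^ K := by
    simp_rw [pow_succ, ← sum_mul, geom_sum_eq (by norm_num : (1 / 2 : ℝ) ≠ 1)]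
    ring
  have hK1 : (1 : ℝ) ≤ K := Nat.one_le_cast.2 (Nat.one_le_iff_ne_zero.2 hK)
  have hC : 1 < ((K : ℝ) + 1) ^ 2 * ∑' n : ℕ, 1 / ((n : ℝ) + (K + 2)) ^ 2 := by
    calc (1 : ℝ) ≤ ((K : ℝ) + 1) ^ 2 * (1 / (K + 2)) := by
          rw [mul_one_div, le_div_iff₀ (by positivity)]
          nlinarith
      _ < _ := by gcongr; exact one_div_lt_tsum_one_div_nat_add_sq (by positivity)
  have hpow : (0 : ℝ) < (1 / 2) ^ K := by positivity
  rw [hkSum, hgeom, mul_assoc]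
  nlinarith

theorem exists_hkSum_eq_one (hK : K ≠ 0) : ∃ r ∈ Set.Ioo (0 : ℝ) (1 / 2), hkSum K r = 1 :=
  intermediate_value_Ioo (by norm_num) (continuous_hkSum K).continuousOn
    ⟨(hkSum_zero hK).trans_lt one_pos, one_lt_hkSum_half hK⟩

theorem hkSum_le {r : ℝ} (hr0 : 0 ≤ r) (hr1 : r < 1) :
    hkSum K r ≤ r / (1 - r) + ((K : ℝ) + 1) * r ^ K := by
  have hgeom : ∑ n ∈ range K, r ^ (n + 1) ≤ r / (1 - r) := by
    calc ∑ n ∈ range K, r ^ (n + 1) = r * ∑ n ∈ Ico 0 K, r ^ n := by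
          simp only [mul_sum, ← range_eq_Ico, pow_succ']
      _ ≤ r * (r ^ 0 / (1 - r)) := by gcongr; exact geom_sum_Ico_le_of_lt_one hr0 hr1
      _ = r / (1 - r) := by ring
  have hC : ((K : ℝ) + 1) ^ 2 * ∑' n : ℕ, 1 / ((n : ℝ) + (K + 2)) ^ 2 ≤ (K : ℝ) + 1 := by
    calc ((K : ℝ) + 1) ^ 2 * ∑' n : ℕ, 1 / ((n : ℝ) + (K + 2)) ^ 2
        ≤ ((K : ℝ) + 1) ^ 2 * (1 / (K + 2 - 1)) := by
          gcongr; exact tsum_one_div_nat_add_sq_le (by linarith [(K.cast_nonneg : (0:ℝ) ≤ K)])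
      _ = (K : ℝ) + 1 := by rw [show (K : ℝ) + 2 - 1 = K + 1 by ring]; field_simp
  have hrK := mul_le_mul_of_nonneg_left hC (pow_nonneg hr0 K)
  rw [hkSum, mul_assoc]
  linarith

theorem eventually_hkSum_lt_one {r : ℝ} (hr0 : 0 ≤ r) (hr : r < 1 / 2) :
    ∀ᶠ K in atTop, hkSum K r < 1 := by
  have hr1 : r < 1 := hr.trans (by norm_num)
  have hlim : Tendsto (fun K : ℕ => r / (1 - r) + ((K : ℝ) + 1) * r ^ K) atTop
      (𝓝 (r / (1 - r) + (0 + 0))) := by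
    simp_rw [add_mul, one_mul]
    exact tendsto_const_nhds.add ((tendsto_self_mul_const_pow_of_lt_one hr0 hr1).add
      (tendsto_pow_atTop_nhds_zero_of_lt_one hr0 hr1))
  have hlt : r / (1 - r) + (0 + 0) < 1 := by
    rw [add_zero, add_zero, div_lt_one (by linarith)]
    linarith
  filter_upwards [hlim.eventually_lt_const hlt] with K hK
  exact (hkSum_le hr0 hr1).trans_lt hK

end hkSum

noncomputable def hkRoot (K : ℕ) : ℝ :=
  if hK : K = 0 then 0 else (exists_hkSum_eq_one hK).choose

section hkRoot

variable {K : ℕ}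

theorem hkRoot_mem (hK : K ≠ 0) : hkRoot K ∈ Set.Ioo (0 : ℝ) (1 / 2) := by
  rw [hkRoot, dif_neg hK]
  exact (exists_hkSum_eq_one hK).choose_spec.1

theorem hkSum_hkRoot (hK : K ≠ 0) : hkSum K (hkRoot K) = 1 := by
  rw [hkRoot, dif_neg hK]
  exact (exists_hkSum_eq_one hK).choose_spec.2

theorem hkSum_exp_le_one_iff (hK : K ≠ 0) (b : ℝ) :
    hkSum K (exp b) ≤ 1 ↔ b ≤ log (hkRoot K) := by
  rw [← hkSum_hkRoot hK, (strictMonoOn_hkSum hK).le_iff_le (exp_pos b).le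
    (hkRoot_mem hK).1.le, le_log_iff_exp_le (hkRoot_mem hK).1]

theorem hkSum_exp_eq_one_iff (hK : K ≠ 0) (b : ℝ) :
    hkSum K (exp b) = 1 ↔ b = log (hkRoot K) := by
  rw [← hkSum_hkRoot hK, (strictMonoOn_hkSum hK).injOn.eq_iff (exp_pos b).le
    (hkRoot_mem hK).1.le]
  exact ⟨fun h => by rw [← h, log_exp], fun h => by rw [h, exp_log (hkRoot_mem hK).1]⟩

theorem log_hkRoot_lt (hK : K ≠ 0) : log (hkRoot K) < -log 2 := by
  rw [← log_inv, ← one_div]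
  exact log_lt_log (hkRoot_mem hK).1 (hkRoot_mem hK).2

theorem tendsto_hkRoot : Tendsto hkRoot atTop (𝓝 (1 / 2)) := by
  refine tendsto_order.2 ⟨fun a ha => ?_, fun a ha => ?_⟩
  · filter_upwards [eventually_hkSum_lt_one (le_max_right a 0) (max_lt ha (by norm_num)),
      eventually_ne_atTop 0] with K hlt hK
    rw [← hkSum_hkRoot hK] at hlt
    exact (le_max_left a 0).trans_lt <|
      (strictMonoOn_hkSum hK).lt_iff_lt (le_max_right a 0) (hkRoot_mem hK).1.le |>.1 hlt
  · filter_upwards [eventually_ne_atTop 0] with K hK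
    exact (hkRoot_mem hK).2.trans ha

end hkRoot

/-- For each `K ≥ 2` there exists `b_K < -log 2` such that, for `b < -log 2`,
`∑_{n ≥ 1} e^{s_n} ≤ 1` iff `b ≤ b_K` (with equality iff `b = b_K`); moreover
`b_K → -log 2` as `K → ∞`. -/
theorem stmt17 :
    ∃ bK : ℕ → ℝ,
      (∀ K : ℕ, 2 ≤ K →
        bK K < -Real.log 2 ∧
        ∀ b : ℝ, b < -Real.log 2 →
          ((∑' n : ℕ, Real.exp (sHK17 b K (n + 1))) ≤ 1 ↔ b ≤ bK K) ∧
          ((∑' n : ℕ, Real.exp (sHK17 b K (n + 1))) = 1 ↔ b = bK K)) ∧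
      Tendsto bK atTop (nhds (-Real.log 2)) := by
  refine ⟨fun K => log (hkRoot K), fun K hK => ?_, ?_⟩
  · have hK0 : K ≠ 0 := by omega
    refine ⟨log_hkRoot_lt hK0, fun b _ => ?_⟩
    rw [tsum_exp_sHK17]
    exact ⟨hkSum_exp_le_one_iff hK0 b, hkSum_exp_eq_one_iff hK0 b⟩
  · have hlog := (continuousAt_log (by norm_num : (1 / 2 : ℝ) ≠ 0)).tendsto.comp tendsto_hkRoot
    rwa [one_div, log_inv] at hlog
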